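/- Let 1 ≤ a ≤ r−2 with a+1 ∉ I. Then s_a c_I is not rational: if a ∉ I (including I = ∅), then (s_a c_I)^{-1}(α_a) = α_a, giving a loop at α_a; if a ∈ I, then with m = n_I(a) one has (s_a c_I)^{-1}(e_a − e_m) = e_a − e_{a+1} ≤ e_a − e_m, giving a loop at e_a − e_m. In either case the rationality graph of s_a c_I has a directed cycle. -/

import Mathlib

noncomputable section

open Finset

/-- `ee r i` is the standard basis vector `e_i` (1-based index) of `ℝ^r`. -/
def ee (r i : ℕ) : Fin r → ℝ := fun j => if (j : ℕ) + 1 = i then 1 else 0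

/-- The type-`D_r` simple roots, 1-based: `α_i = e_i - e_{i+1}` for `i ≤ r-1`,
`α_r = e_{r-1} + e_r`. -/
def sroot (r i : ℕ) : Fin r → ℝ :=
  if i = r then ee r (r - 1) + ee r r else ee r i - ee r (i + 1)

/-- Root-poset order: `ρ ≤ η` iff `η - ρ` is a non-negative integer combination
of the simple roots. -/
def rootLE (r : ℕ) (ρ η : Fin r → ℝ) : Prop :=
  ∃ m : ℕ → ℕ, η - ρ = ∑ i ∈ Finset.Icc 1 r, (m i : ℝ) • sroot r i

/-- The positive roots of type `D_r`: `e_i ± e_j` for `1 ≤ i < j ≤ r`. -/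
def Pos (r : ℕ) : Set (Fin r → ℝ) :=
  {v | ∃ i j, 1 ≤ i ∧ i < j ∧ j ≤ r ∧ (v = ee r i - ee r j ∨ v = ee r i + ee r j)}

/-- The `i`-th (1-based) coordinate of a vector. -/
def coordN (r : ℕ) (x : Fin r → ℝ) (i : ℕ) : ℝ :=
  ∑ j : Fin r, if (j : ℕ) + 1 = i then x j else 0

/-- The successor map on `I ∪ {r}`: least element of `I ∪ {r}` larger than `a`. -/
def nextI (r : ℕ) (I : Finset ℕ) (a : ℕ) : ℕ :=
  WithTop.untopD r (((insert r I).filter (fun x => a < x)).min)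

/-- `min (I ∪ {r})`; equals `min I` for nonempty `I ⊆ {1,…,r-1}` and `r` for `I = ∅`. -/
def minI (r : ℕ) (I : Finset ℕ) : ℕ := WithTop.untopD r ((insert r I).min)

/-- `max I` (0 if empty). -/
def maxI (I : Finset ℕ) : ℕ := WithBot.unbotD 0 (I.max)

/-- The increasing cycle `p_I` on `I ∪ {r}`, fixing all other points. -/
def pI (r : ℕ) (I : Finset ℕ) (a : ℕ) : ℕ :=
  if a ∈ I then nextI r I a else if a = r then minI r I else a

/-- Images of the basis vectors under `c_I`. -/
def cIb (r : ℕ) (I : Finset ℕ) (j : ℕ) : Fin r → ℝ :=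
  if j = r then ee r (minI r I) else -(ee r (pI r I j))

/-- The signed permutation `c_I`, extended linearly; for `I = ∅` it is `w_0`. -/
def cI (r : ℕ) (I : Finset ℕ) (x : Fin r → ℝ) : Fin r → ℝ :=
  ∑ j ∈ Finset.Icc 1 r, coordN r x j • cIb r I j

/-- Images of the basis vectors under `d_I`. -/
def dIb (r : ℕ) (I : Finset ℕ) (j : ℕ) : Fin r → ℝ :=
  if j = maxI I then ee r r
  else if j = r then -(ee r (minI r I))
  else -(ee r (pI r I j))

/-- The signed permutation `d_I`, extended linearly. -/
def dI (r : ℕ) (I : Finset ℕ) (x : Fin r → ℝ) : Fin r → ℝ :=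
  ∑ j ∈ Finset.Icc 1 r, coordN r x j • dIb r I j

/-- The longest element `w_0` for `r` odd: `e_i ↦ -e_i` for `i < r`, `e_r ↦ e_r`. -/
def w0 (r : ℕ) (x : Fin r → ℝ) : Fin r → ℝ :=
  fun j => if (j : ℕ) + 1 = r then x j else -(x j)

/-- The set `A_I`. -/
def AI (r : ℕ) (I : Finset ℕ) : Set (Fin r → ℝ) :=
  {v | ∃ a b, a ∈ I ∧ a < b ∧ b < nextI r I a ∧ v = ee r b - ee r (nextI r I a)}

/-- The set `B_I`. -/
def BI (r : ℕ) (I : Finset ℕ) : Set (Fin r → ℝ) :=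
  {v | ∃ q, minI r I < q ∧ q ≤ r ∧ v = ee r (minI r I) - ee r q}

/-- `ν₀(u) = u(Π₊) ∩ Π₊`. -/
def nu0 (r : ℕ) (u : (Fin r → ℝ) → (Fin r → ℝ)) : Set (Fin r → ℝ) :=
  {β | β ∈ Pos r ∧ ∃ γ ∈ Pos r, u γ = β}

/-- Arrow `α → β` in the rationality graph of `u`: `u⁻¹(α) ≤ β`,
expressed via a positive preimage `γ` of `α`. -/
def Arrow (r : ℕ) (u : (Fin r → ℝ) → (Fin r → ℝ)) (α β : Fin r → ℝ) : Prop :=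
  ∃ γ ∈ Pos r, u γ = α ∧ rootLE r γ β

/-- The rationality graph of `u` has a directed cycle. -/
def HasCycle (r : ℕ) (u : (Fin r → ℝ) → (Fin r → ℝ)) : Prop :=
  ∃ (n : ℕ) (f : ℕ → (Fin r → ℝ)), 0 < n ∧ (∀ i ≤ n, f i ∈ nu0 r u) ∧
    f 0 = f n ∧ ∀ i < n, Arrow r u (f i) (f (i + 1))

/-- The simple reflection `s_a` for `1 ≤ a ≤ r-1`: swaps coordinates `a` and `a+1`. -/
def sw (r a : ℕ) (x : Fin r → ℝ) : Fin r → ℝ := fun j =>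
  if (j : ℕ) + 1 = a then coordN r x (a + 1)
  else if (j : ℕ) + 1 = a + 1 then coordN r x a
  else x j

/-- The spin reflection `s_r`: `e_{r-1} ↦ -e_r`, `e_r ↦ -e_{r-1}`. -/
def sSpin (r : ℕ) (x : Fin r → ℝ) : Fin r → ℝ := fun j =>
  if (j : ℕ) + 1 = r - 1 then -(coordN r x r)
  else if (j : ℕ) + 1 = r then -(coordN r x (r - 1))
  else x j


lemma coordN_apply (r : ℕ) (x : Fin r → ℝ) (i : ℕ) (h1 : 1 ≤ i) (h2 : i ≤ r) :
    coordN r x i = x ⟨i - 1, by omega⟩ := by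
  unfold coordN
  rw [Finset.sum_eq_single (⟨i - 1, by omega⟩ : Fin r)]
  · rw [if_pos (by simp; omega)]
  · intro b _ hb
    rw [if_neg]
    intro h
    apply hb
    apply Fin.ext
    show (b : ℕ) = i - 1
    omega
  · simp

lemma coordN_ee (r i j : ℕ) (hj1 : 1 ≤ j) (hj2 : j ≤ r) :
    coordN r (ee r i) j = if i = j then 1 else 0 := by
  rw [coordN_apply r _ j hj1 hj2]
  unfold ee
  simp only
  split_ifs with h h' h' <;> first | rfl | omega

lemma coordN_sub (r : ℕ) (x y : Fin r → ℝ) (j : ℕ) :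
    coordN r (x - y) j = coordN r x j - coordN r y j := by
  unfold coordN
  rw [← Finset.sum_sub_distrib]
  apply Finset.sum_congr rfl
  intro k _
  by_cases h : (k : ℕ) + 1 = j <;> simp [h]

lemma cI_ee (r : ℕ) (I : Finset ℕ) (i : ℕ) (h1 : 1 ≤ i) (h2 : i ≤ r) :
    cI r I (ee r i) = cIb r I i := by
  unfold cI
  rw [Finset.sum_eq_single i]
  · rw [coordN_ee r i i h1 h2, if_pos rfl, one_smul]
  · intro b hb hbi
    rw [coordN_ee r i b (Finset.mem_Icc.mp hb).1 (Finset.mem_Icc.mp hb).2,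
      if_neg (fun h => hbi h.symm), zero_smul]
  · intro h
    exact absurd (Finset.mem_Icc.mpr ⟨h1, h2⟩) h

lemma cI_sub (r : ℕ) (I : Finset ℕ) (x y : Fin r → ℝ) :
    cI r I (x - y) = cI r I x - cI r I y := by
  unfold cI
  rw [← Finset.sum_sub_distrib]
  apply Finset.sum_congr rfl
  intro j _
  rw [coordN_sub, sub_smul]

lemma sw_eval (r a : ℕ) (h1 : 1 ≤ a) (h2 : a + 1 ≤ r) (x : Fin r → ℝ) (j : Fin r) :
    sw r a x j = if (j : ℕ) + 1 = a then x ⟨a, by omega⟩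
      else if (j : ℕ) + 1 = a + 1 then x ⟨a - 1, by omega⟩ else x j := by
  unfold sw
  rw [coordN_apply r x (a + 1) (by omega) h2, coordN_apply r x a h1 (by omega)]
  simp only [Nat.add_sub_cancel]

lemma nextI_facts (r : ℕ) (I : Finset ℕ) (a : ℕ) (ha : a < r) :
    a < nextI r I a ∧ nextI r I a ≤ r ∧ nextI r I a ∈ insert r I := by
  set S := (insert r I).filter (fun x => a < x) with hS
  have hrS : r ∈ S := Finset.mem_filter.mpr ⟨Finset.mem_insert_self _ _, ha⟩
  have hne : S.Nonempty := ⟨r, hrS⟩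
  have hm : nextI r I a = S.min' hne := by
    unfold nextI
    rw [← hS, ← Finset.coe_min' hne, WithTop.untopD_coe]
  have hmem := S.min'_mem hne
  rw [← hm] at hmem
  obtain ⟨h1, h2⟩ := Finset.mem_filter.mp hmem
  exact ⟨h2, by rw [hm]; exact S.min'_le r hrS, h1⟩

lemma tele {M : Type*} [AddCommGroup M] (g : ℕ → M) (s t : ℕ) (h : s ≤ t) :
    ∑ i ∈ Finset.Ico s t, (g i - g (i + 1)) = g s - g t := by
  induction t with
  | zero =>
    have : s = 0 := Nat.le_zero.mp h
    simp [this]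
  | succ n ih =>
    rcases Nat.lt_or_ge s (n + 1) with h' | h'
    · rw [Finset.sum_Ico_succ_top (by omega), ih (by omega)]
      abel
    · have : s = n + 1 := by omega
      simp [this]

lemma rootLE_tele (r a m : ℕ) (ha : 1 ≤ a) (h1 : a + 1 ≤ m) (h2 : m ≤ r) :
    rootLE r (ee r a - ee r (a + 1)) (ee r a - ee r m) := by
  refine ⟨fun i => if a + 1 ≤ i ∧ i < m then 1 else 0, ?_⟩
  have key : (ee r a - ee r m) - (ee r a - ee r (a + 1)) = ee r (a + 1) - ee r m := by
    abel
  rw [key]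
  simp only [Nat.cast_ite, Nat.cast_one, Nat.cast_zero, ite_smul, one_smul, zero_smul,
    ← Finset.mem_Ico]
  rw [Finset.sum_ite_mem,
    Finset.inter_eq_right.mpr (fun i hi => by
      simp only [Finset.mem_Ico] at hi
      exact Finset.mem_Icc.mpr (by omega))]
  have step2 : ∀ i ∈ Finset.Ico (a + 1) m,
      sroot r i = ee r i - ee r (i + 1) := by
    intro i hi
    simp only [Finset.mem_Ico] at hi
    unfold sroot
    rw [if_neg (by omega)]
  rw [Finset.sum_congr rfl step2, tele (fun i => ee r i) (a + 1) m h1]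

lemma Pos_sub (r i j : ℕ) (h1 : 1 ≤ i) (h2 : i < j) (h3 : j ≤ r) :
    ee r i - ee r j ∈ Pos r := ⟨i, j, h1, h2, h3, Or.inl rfl⟩

lemma rootLE_refl (r : ℕ) (x : Fin r → ℝ) : rootLE r x x :=
  ⟨fun _ => 0, by simp⟩

lemma key_eq (r : ℕ) (hr : 5 ≤ r) (I : Finset ℕ) (hIs : I ⊆ Finset.Icc 1 (r - 1))
    (a : ℕ) (ha1 : 1 ≤ a) (ha2 : a ≤ r - 2) (haI : a + 1 ∉ I) :
    sw r a (cI r I (ee r a - ee r (a + 1)))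
      = ee r a - ee r (if a ∈ I then nextI r I a else a + 1) := by
  have har : a + 1 ≤ r := by omega
  rw [cI_sub, cI_ee r I a ha1 (by omega), cI_ee r I (a + 1) (by omega) har]
  have hcb1 : cIb r I (a + 1) = -(ee r (a + 1)) := by
    unfold cIb pI
    rw [if_neg (by omega), if_neg haI, if_neg (by omega)]
  by_cases hmem : a ∈ I
  · obtain ⟨hm1, hm2, hm3⟩ := nextI_facts r I a (by omega)
    set m := nextI r I a with hmdef
    have hmne : m ≠ a + 1 := by
      intro h
      rw [h] at hm3
      rcases Finset.mem_insert.mp hm3 with h' | h'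
      · omega
      · exact haI h'
    have hcb0 : cIb r I a = -(ee r m) := by
      unfold cIb pI
      rw [if_neg (by omega), if_pos hmem]
    rw [hcb0, hcb1, if_pos hmem]
    clear_value m
    funext j
    rw [sw_eval r a ha1 har]
    simp only [Pi.sub_apply, Pi.neg_apply, ee]
    split_ifs <;> norm_num <;> omega
  · have hcb0 : cIb r I a = -(ee r a) := by
      unfold cIb pI
      rw [if_neg (by omega), if_neg hmem, if_neg (by omega)]
    rw [hcb0, hcb1, if_neg hmem]
    funext j
    rw [sw_eval r a ha1 har]
    simp only [Pi.sub_apply, Pi.neg_apply, ee]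
    split_ifs <;> norm_num <;> omega

/-- for `1 ≤ a ≤ r-2` with `a+1 ∉ I`, the element `s_a c_I` is not
rational: its rationality graph has a directed cycle, exhibited by a loop at
`α_a` (when `a ∉ I`) or at `e_a - e_{n_I(a)}` (when `a ∈ I`). -/
theorem stmt13 (r : ℕ) (hr : 5 ≤ r) (hodd : Odd r)
    (I : Finset ℕ) (hIs : I ⊆ Finset.Icc 1 (r - 1))
    (a : ℕ) (ha1 : 1 ≤ a) (ha2 : a ≤ r - 2) (haI : a + 1 ∉ I) :
    HasCycle r (fun x => sw r a (cI r I x)) ∧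
    (a ∉ I → sw r a (cI r I (sroot r a)) = sroot r a) ∧
    (a ∈ I →
      sw r a (cI r I (ee r a - ee r (a + 1))) = ee r a - ee r (nextI r I a) ∧
      rootLE r (ee r a - ee r (a + 1)) (ee r a - ee r (nextI r I a))) := by
  have har : a + 1 ≤ r := by omega
  have hkey := key_eq r hr I hIs a ha1 ha2 haI
  have hsroot : sroot r a = ee r a - ee r (a + 1) := by
    unfold sroot; rw [if_neg (by omega)]
  constructor
  · -- HasCycle
    by_cases hmem : a ∈ I
    · obtain ⟨hm1, hm2, _⟩ := nextI_facts r I a (by omega)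
      rw [if_pos hmem] at hkey
      set m := nextI r I a with hmdef
      set β : Fin r → ℝ := ee r a - ee r m with hβ
      have hβPos : β ∈ Pos r := Pos_sub r a m ha1 hm1 hm2
      have hγPos : ee r a - ee r (a + 1) ∈ Pos r := Pos_sub r a (a + 1) ha1 (by omega) har
      refine ⟨1, fun _ => β, one_pos, fun i _ => ⟨hβPos, ee r a - ee r (a + 1), hγPos, hkey⟩,
        rfl, fun i _ => ⟨ee r a - ee r (a + 1), hγPos, hkey, rootLE_tele r a m ha1 (by omega) hm2⟩⟩
    · rw [if_neg hmem] at hkey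
      set β : Fin r → ℝ := ee r a - ee r (a + 1) with hβ
      have hβPos : β ∈ Pos r := Pos_sub r a (a + 1) ha1 (by omega) har
      refine ⟨1, fun _ => β, one_pos, fun i _ => ⟨hβPos, β, hβPos, hkey⟩,
        rfl, fun i _ => ⟨β, hβPos, hkey, rootLE_refl r β⟩⟩
  constructor
  · intro hmem
    rw [hsroot]
    rw [if_neg hmem] at hkey
    exact hkey
  · intro hmem
    obtain ⟨hm1, hm2, _⟩ := nextI_facts r I a (by omega)
    rw [if_pos hmem] at hkey
    exact ⟨hkey, rootLE_tele r a (nextI r I a) ha1 (by omega) hm2⟩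

end
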